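/- Let G be a graph containing a path v1,v2,v3,v4 of four consecutive vertices each of degree 4 in G. Then the subgraph induced by {v1,v2,v3,v4} is (∅,5)-boundary-reducible with empty boundary. -/

import Mathlib

open Finset

/-- A proper coloring of `G` from the lists `L`. -/
def IsProperListColoring {V : Type} (G : SimpleGraph V) (L : V → Finset ℕ) (φ : V → ℕ) : Prop :=
  (∀ v, φ v ∈ L v) ∧ ∀ ⦃u v : V⦄, G.Adj u v → φ u ≠ φ v

/-- `G` is weighted `ε`-flexible for lists of size `k`. -/
def WeightedFlexible {V : Type} [Fintype V] (G : SimpleGraph V) (k : ℕ) (ε : ℝ) : Prop :=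
  ∀ L : V → Finset ℕ, (∀ v, k ≤ (L v).card) →
    ∀ w : V → ℕ → ℝ, (∀ v c, 0 ≤ w v c) → (∀ v c, c ∉ L v → w v c = 0) →
      ∃ φ : V → ℕ, IsProperListColoring G L φ ∧
        ε * (∑ v, ∑ c ∈ L v, w v c) ≤ ∑ v, w v (φ v)

/-- `G` is weakly `ε`-flexible for lists of size `k`. -/
def WeaklyFlexible {V : Type} [Fintype V] (G : SimpleGraph V) (k : ℕ) (ε : ℝ) : Prop :=
  ∀ L : V → Finset ℕ, (∀ v, k ≤ (L v).card) →
    ∀ r : V → ℕ, (∀ v, r v ∈ L v) →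
      ∃ φ : V → ℕ, IsProperListColoring G L φ ∧
        ε * (Fintype.card V : ℝ) ≤ ((Finset.univ.filter fun v => φ v = r v).card : ℝ)

/-- `G` has a drawing in the plane: vertices go to distinct points, edges to simple
continuous arcs joining their endpoints, arcs internally avoid vertices and each other. -/
def HasPlanarEmbedding {V : Type} (G : SimpleGraph V) : Prop :=
  ∃ (pos : V → ℝ × ℝ) (γ : Sym2 V → ℝ → ℝ × ℝ),
    Function.Injective pos ∧
    (∀ e ∈ G.edgeSet, ContinuousOn (γ e) (Set.Icc 0 1)) ∧
    (∀ e ∈ G.edgeSet, Set.InjOn (γ e) (Set.Icc 0 1)) ∧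
    (∀ u v : V, G.Adj u v → ({γ s(u, v) 0, γ s(u, v) 1} : Set (ℝ × ℝ)) = {pos u, pos v}) ∧
    (∀ e ∈ G.edgeSet, ∀ t ∈ Set.Ioo (0 : ℝ) 1, γ e t ∉ Set.range pos) ∧
    (∀ e ∈ G.edgeSet, ∀ f ∈ G.edgeSet, e ≠ f →
      ∀ s ∈ Set.Ioo (0 : ℝ) 1, ∀ t ∈ Set.Ioo (0 : ℝ) 1, γ e s ≠ γ f t)

/-- `G` contains a copy of the graph `p.2` as a (not necessarily induced) subgraph. -/
def ContainsCopy {V : Type} (G : SimpleGraph V) (p : (W : Type) × SimpleGraph W) : Prop :=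
  ∃ f : p.2 →g G, Function.Injective f

/-- `K₄` minus an edge (the diamond). -/
def diamondGraph : SimpleGraph (Fin 4) :=
  SimpleGraph.fromEdgeSet {s(0, 1), s(0, 2), s(0, 3), s(1, 2), s(1, 3)}

/-- The house: a `3`-cycle `0 1 4` and a `4`-cycle `0 1 2 3` sharing the edge `01`. -/
def houseGraph : SimpleGraph (Fin 5) :=
  SimpleGraph.fromEdgeSet {s(0, 1), s(1, 2), s(2, 3), s(3, 0), s(0, 4), s(1, 4)}

/-- Two triangles sharing exactly one vertex. -/
def bowtieGraph : SimpleGraph (Fin 5) :=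
  SimpleGraph.fromEdgeSet {s(0, 1), s(1, 2), s(0, 2), s(0, 3), s(3, 4), s(0, 4)}

/-- Two disjoint triangles joined by an edge. -/
def twoTrianglesEdgeGraph : SimpleGraph (Fin 6) :=
  SimpleGraph.fromEdgeSet {s(0, 1), s(1, 2), s(0, 2), s(3, 4), s(4, 5), s(3, 5), s(0, 3)}

def IsTriangle {V : Type} (G : SimpleGraph V) (a b c : V) : Prop :=
  G.Adj a b ∧ G.Adj b c ∧ G.Adj a c

/-- Any two distinct `3`-cycles of `G` are at distance at least `2`. -/
def TrianglesFarApart {V : Type} (G : SimpleGraph V) : Prop :=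
  ∀ a b c a' b' c' : V, IsTriangle G a b c → IsTriangle G a' b' c' →
    ({a, b, c} : Set V) ≠ ({a', b', c'} : Set V) →
    ∀ x ∈ ({a, b, c} : Set V), ∀ y ∈ ({a', b', c'} : Set V), x ≠ y ∧ ¬ G.Adj x y

/-- Every nonempty (induced) subgraph of `G` has a vertex of degree at most `d`. -/
def Degenerate {V : Type} (G : SimpleGraph V) [DecidableRel G.Adj] (d : ℕ) : Prop :=
  ∀ S : Finset V, S.Nonempty → ∃ v ∈ S, (S.filter fun w => G.Adj v w).card ≤ d

/-- The degree of `v` into the set `A`. -/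
def degIn {V : Type} (G : SimpleGraph V) [DecidableRel G.Adj] (A : Finset V) (v : V) : ℕ :=
  (A.filter fun w => G.Adj v w).card

/-- The graph induced by `G` on `T` is colorable from every list assignment
with list sizes at least `f`. -/
def ColorableOn {V : Type} (G : SimpleGraph V) (T : Finset V) (f : V → ℤ) : Prop :=
  ∀ L : V → Finset ℕ, (∀ v ∈ T, f v ≤ ((L v).card : ℤ)) →
    ∃ φ : V → ℕ, (∀ v ∈ T, φ v ∈ L v) ∧ ∀ u ∈ T, ∀ v ∈ T, G.Adj u v → φ u ≠ φ v

/-- The subgraph of `G` induced on `S`, together with one additional vertex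
adjacent exactly to the vertices of `I`. -/
def apexGraph {V : Type} (G : SimpleGraph V) (S I : Finset V) :
    SimpleGraph ({x // x ∈ S} ⊕ Unit) where
  Adj x y :=
    match x, y with
    | Sum.inl a, Sum.inl b => G.Adj a.1 b.1
    | Sum.inl a, Sum.inr _ => a.1 ∈ I
    | Sum.inr _, Sum.inl b => b.1 ∈ I
    | Sum.inr _, Sum.inr _ => False
  symm := ⟨by
    rintro (a | a) (b | b) h
    · exact G.adj_symm h
    · exact h
    · exact h
    · exact h⟩
  loopless := ⟨by
    rintro (a | a) h
    · exact G.irrefl h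
    · exact h⟩

/-- `I ⊆ S` is `F`-forbidding (for the subgraph of `G` induced on `S`):
the induced subgraph plus an apex over `I` contains no member of `F` as a subgraph. -/
def Forbidding {V : Type} (F : Set ((W : Type) × SimpleGraph W)) (G : SimpleGraph V)
    (S I : Finset V) : Prop :=
  ∀ p ∈ F, ¬ ContainsCopy (apexGraph G S I) p

/-- The subgraph of `G` induced on `S` is `(F,k)`-boundary-reducible with boundary `B`,
inside the ambient induced subgraph of `G` on `A` (degrees `deg_G` are measured in `A`). -/
def BoundaryReducibleIn {V : Type} [DecidableEq V] (F : Set ((W : Type) × SimpleGraph W))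
    (k : ℕ) (G : SimpleGraph V) [DecidableRel G.Adj] (A S B : Finset V) : Prop :=
  S ⊆ A ∧ B ⊂ S ∧
  (∀ v ∈ S \ B, ColorableOn G (S \ B)
      (Function.update (fun w => (k : ℤ) - degIn G A w + degIn G (S \ B) w) v 1)) ∧
  (∀ I : Finset V, I ⊆ S \ B → (I.card : ℤ) ≤ (k : ℤ) - 2 → Forbidding F G S I →
    ColorableOn G (S \ B)
      (fun w => (k : ℤ) - degIn G A w + degIn G (S \ B) w - if w ∈ I then 1 else 0))

/-- Weak `(F,k)`-boundary-reducibility, witnessed by the set `Fx = Fix(H)`. -/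
def WeakBoundaryReducibleInWith {V : Type} [DecidableEq V]
    (F : Set ((W : Type) × SimpleGraph W)) (k : ℕ) (G : SimpleGraph V) [DecidableRel G.Adj]
    (A S B Fx : Finset V) : Prop :=
  S ⊆ A ∧ B ⊂ S ∧ Fx.Nonempty ∧ Fx ⊆ S \ B ∧
  (∀ v ∈ Fx, ColorableOn G (S \ B)
      (Function.update (fun w => (k : ℤ) - degIn G A w + degIn G (S \ B) w) v 1)) ∧
  (∀ I : Finset V, I ⊆ S \ B → (I.card : ℤ) ≤ (k : ℤ) - 2 → Forbidding F G S I →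
    ColorableOn G (S \ B)
      (fun w => (k : ℤ) - degIn G A w + degIn G (S \ B) w - if w ∈ I then 1 else 0))

/-- An `(F,k,b)`-resolution of `G`: nested induced subgraphs `G_i` of `G` on the vertex
sets `A i`, where `G_i` is obtained from `G_{i-1}` by deleting `H_i - B_i` for an induced
`(F,k)`-boundary-reducible subgraph `H_i` (on vertex set `S i`) of `G_{i-1}`,
and the last graph `G_M` is itself reducible with empty boundary and has at most `b` vertices. -/
structure Resolution {V : Type} [Fintype V] [DecidableEq V]
    (F : Set ((W : Type) × SimpleGraph W)) (k b : ℕ)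
    (G : SimpleGraph V) [DecidableRel G.Adj] where
  M : ℕ
  S : ℕ → Finset V
  B : ℕ → Finset V
  A : ℕ → Finset V
  hA0 : A 0 = Finset.univ
  hAstep : ∀ i, 1 ≤ i → i ≤ M → A i = A (i - 1) \ (S i \ B i)
  avoid : ∀ p ∈ F, ¬ ContainsCopy G p
  red : ∀ i, 1 ≤ i → i ≤ M → BoundaryReducibleIn F k G (A (i - 1)) (S i) (B i)
  size : ∀ i, 1 ≤ i → i ≤ M → (S i \ B i).card ≤ b
  last : BoundaryReducibleIn F k G (A M) (A M) ∅
  lastsize : (A M).card ≤ b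

/-- A weak `(F,k,b)`-resolution of `G`; `Fx i` is the set `Fix(H_i)` for the `i`-th
reducible subgraph (`1 ≤ i ≤ M`), and `Fx 0` is the `Fix` set of the last graph `G_M`. -/
structure WeakResolution {V : Type} [Fintype V] [DecidableEq V]
    (F : Set ((W : Type) × SimpleGraph W)) (k b : ℕ)
    (G : SimpleGraph V) [DecidableRel G.Adj] where
  M : ℕ
  S : ℕ → Finset V
  B : ℕ → Finset V
  A : ℕ → Finset V
  Fx : ℕ → Finset V
  hA0 : A 0 = Finset.univ
  hAstep : ∀ i, 1 ≤ i → i ≤ M → A i = A (i - 1) \ (S i \ B i)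
  avoid : ∀ p ∈ F, ¬ ContainsCopy G p
  red : ∀ i, 1 ≤ i → i ≤ M → WeakBoundaryReducibleInWith F k G (A (i - 1)) (S i) (B i) (Fx i)
  size : ∀ i, 1 ≤ i → i ≤ M → (S i \ B i).card ≤ b
  last : WeakBoundaryReducibleInWith F k G (A M) (A M) ∅ (Fx 0)
  lastsize : (A M).card ≤ b

/-- `Fix(G)`: the union of the `Fix` sets of the reducible subgraphs of the resolution. -/
def WeakResolution.FixG {V : Type} [Fintype V] [DecidableEq V]
    {F : Set ((W : Type) × SimpleGraph W)} {k b : ℕ}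
    {G : SimpleGraph V} [DecidableRel G.Adj] (R : WeakResolution F k b G) : Finset V :=
  (Finset.range (R.M + 1)).biUnion R.Fx

/-!
Each vertex of the path has degree `4`, so with `k = 5` its list exceeds its number of neighbours
inside the path by one. Greedy coloring (peeling off vertices with more colors than neighbours)
then works: for FIX, the vertex with a single color is peeled last, i.e. colored first; for FORB,
the path is connected and some vertex keeps its slack since `|I| ≤ 3 < 4`.
-/

lemma exists_adj_boundary_of_connected_induce {V : Type} {G : SimpleGraph V} {s U : Set V}
    (h : (G.induce s).Connected) {w x : V} (hw : w ∈ s) (hwU : w ∈ U) (hx : x ∈ s) (hxU : x ∉ U) :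
    ∃ a ∈ U, ∃ b ∈ s, b ∉ U ∧ G.Adj a b := by
  obtain ⟨p⟩ := h.preconnected ⟨w, hw⟩ ⟨x, hx⟩
  obtain ⟨d, -, hd₁, hd₂⟩ := p.exists_boundary_dart {y | y.1 ∈ U} hwU hxU
  exact ⟨_, hd₁, _, d.snd.2, hd₂, d.adj⟩

section GreedyListColoring

variable {V : Type} (G : SimpleGraph V) [DecidableRel G.Adj]

lemma degIn_mono {U T : Finset V} (h : U ⊆ T) (w : V) : degIn G U w ≤ degIn G T w :=
  card_le_card (filter_subset_filter _ h)

lemma degIn_lt_degIn {U T : Finset V} (h : U ⊆ T) {w x : V} (hxT : x ∈ T) (hxU : x ∉ U)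
    (hwx : G.Adj w x) : degIn G U w < degIn G T w :=
  card_lt_card <| (ssubset_iff_of_subset (filter_subset_filter _ h)).2
    ⟨x, mem_filter.2 ⟨hxT, hwx⟩, fun hx => hxU (mem_filter.1 hx).1⟩

lemma degIn_univ [Fintype V] (w : V) : degIn G univ w = G.degree w := by
  rw [degIn, ← SimpleGraph.neighborFinset_eq_filter, SimpleGraph.card_neighborFinset_eq_degree]

theorem colorableOn_of_forall_exists_degIn_lt [DecidableEq V] (f : V → ℤ) (T : Finset V)
    (h : ∀ U ⊆ T, U.Nonempty → ∃ w ∈ U, (degIn G U w : ℤ) < f w) : ColorableOn G T f := by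
  induction T using Finset.strongInduction with
  | H T ih =>
  intro L hL
  rcases T.eq_empty_or_nonempty with rfl | hT
  · exact ⟨fun _ => 0, by simp, by simp⟩
  obtain ⟨w, hwT, hw⟩ := h T subset_rfl hT
  obtain ⟨φ, hφL, hφ⟩ := ih (T.erase w) (erase_ssubset hwT)
    (fun U hU => h U (hU.trans (erase_subset w T))) L (fun v hv => hL v (mem_of_mem_erase hv))
  have hfree : #((T.filter fun v => G.Adj w v).image φ) < #(L w) := by
    have := hL w hwT
    have := card_image_le (s := T.filter fun v => G.Adj w v) (f := φ)
    rw [degIn] at hw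
    omega
  obtain ⟨c, hcL, hc⟩ := exists_mem_notMem_of_card_lt_card hfree
  have hcφ : ∀ v ∈ T, G.Adj w v → c ≠ φ v := fun v hv hwv hcv =>
    hc (hcv ▸ mem_image_of_mem φ (mem_filter.2 ⟨hv, hwv⟩))
  refine ⟨Function.update φ w c, fun v hv => ?_, fun u hu v hv huv => ?_⟩
  · rcases eq_or_ne v w with rfl | hvw
    · simpa using hcL
    · simpa [hvw] using hφL v (mem_erase.2 ⟨hvw, hv⟩)
  · have hw_ne : ∀ v ∈ T, G.Adj w v → Function.update φ w c w ≠ Function.update φ w c v :=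
      fun v hv hwv => by
        rw [Function.update_self, Function.update_of_ne hwv.ne.symm]
        exact hcφ v hv hwv
    by_cases huw : u = w
    · subst huw
      exact hw_ne v hv huv
    by_cases hvw : v = w
    · subst hvw
      exact (hw_ne u hu huv.symm).symm
    rw [Function.update_of_ne huw, Function.update_of_ne hvw]
    exact hφ u (mem_erase.2 ⟨huw, hu⟩) v (mem_erase.2 ⟨hvw, hv⟩) huv

theorem colorableOn_update_one [DecidableEq V] {T : Finset V} {g : V → ℤ}
    (hg : ∀ w ∈ T, (degIn G T w : ℤ) < g w) (v : V) :
    ColorableOn G T (Function.update g v 1) := by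
  refine colorableOn_of_forall_exists_degIn_lt G _ T fun U hUT ⟨w, hw⟩ => ?_
  by_cases hU : ∃ u ∈ U, u ≠ v
  · obtain ⟨u, hu, huv⟩ := hU
    refine ⟨u, hu, ?_⟩
    rw [Function.update_of_ne huv]
    exact lt_of_le_of_lt (by exact_mod_cast degIn_mono G hUT u) (hg u (hUT hu))
  · push Not at hU
    obtain rfl := hU w hw
    refine ⟨w, hw, ?_⟩
    have : degIn G U w = 0 := card_eq_zero.2 <| filter_eq_empty_iff.2 fun u hu hwu =>
      G.loopless.irrefl w (hU u hu ▸ hwu)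
    simp [this]

/-- In a proper subset `U` of a connected `T`, some vertex has a neighbour in `T \ U`, which pays
for the color it may have lost; `U = T` is handled by a vertex outside `I`. -/
theorem colorableOn_sub_indicator [DecidableEq V] {T I : Finset V} {g : V → ℤ}
    (hg : ∀ w ∈ T, (degIn G T w : ℤ) < g w) (hconn : (G.induce (T : Set V)).Connected)
    (hI : ¬ T ⊆ I) :
    ColorableOn G T (fun w => g w - if w ∈ I then 1 else 0) := by
  refine colorableOn_of_forall_exists_degIn_lt G _ T fun U hUT ⟨w, hw⟩ => ?_
  rcases eq_or_ne U T with rfl | hne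
  · obtain ⟨u, hu, huI⟩ := not_subset.1 hI
    exact ⟨u, hu, by simpa [huI] using hg u hu⟩
  · obtain ⟨x, hxT, hxU⟩ := exists_of_ssubset (hUT.ssubset_of_ne hne)
    obtain ⟨a, ha, b, hb, hbU, hab⟩ :=
      exists_adj_boundary_of_connected_induce (U := U) hconn (hUT hw) hw hxT hxU
    refine ⟨a, ha, ?_⟩
    have := degIn_lt_degIn G hUT hb hbU hab
    have := hg a (hUT ha)
    split_ifs <;> omega

end GreedyListColoring

lemma connected_induce_path4 {V : Type} [DecidableEq V] {G : SimpleGraph V} {v1 v2 v3 v4 : V}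
    (h12 : G.Adj v1 v2) (h23 : G.Adj v2 v3) (h34 : G.Adj v3 v4) :
    (G.induce (({v1, v2, v3, v4} : Finset V) : Set V)).Connected := by
  let p : G.Walk v1 v4 := .cons h12 (.cons h23 (.cons h34 .nil))
  have hS : (({v1, v2, v3, v4} : Finset V) : Set V) = {v | v ∈ p.support} := by
    ext; simp [p]
  exact hS ▸ p.connected_induce_support

theorem path4_reducible {V : Type} [Fintype V] [DecidableEq V]
    (G : SimpleGraph V) [DecidableRel G.Adj]
    (v1 v2 v3 v4 : V)
    (h12 : G.Adj v1 v2) (h23 : G.Adj v2 v3) (h34 : G.Adj v3 v4)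
    (h13 : v1 ≠ v3) (h14 : v1 ≠ v4) (h24 : v2 ≠ v4)
    (hd1 : G.degree v1 = 4) (hd2 : G.degree v2 = 4) (hd3 : G.degree v3 = 4)
    (hd4 : G.degree v4 = 4) :
    BoundaryReducibleIn (∅ : Set ((W : Type) × SimpleGraph W)) 5 G Finset.univ
      {v1, v2, v3, v4} ∅ := by
  set S : Finset V := {v1, v2, v3, v4}
  have hslack : ∀ w ∈ S, (degIn G S w : ℤ) < 5 - degIn G univ w + degIn G S w := by
    intro w hw
    rw [degIn_univ]
    simp only [S, mem_insert, mem_singleton] at hw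
    rcases hw with rfl | rfl | rfl | rfl <;> omega
  have hcard : #S = 4 := card_eq_four.2 ⟨v1, v2, v3, v4, h12.ne, h13, h14, h23.ne, h24, h34.ne, rfl⟩
  refine ⟨subset_univ S, empty_ssubset.2 ⟨v1, by simp [S]⟩, ?_, ?_⟩ <;> simp only [sdiff_empty]
  · exact fun v _ => colorableOn_update_one G hslack v
  · intro I _ hI _
    exact colorableOn_sub_indicator G hslack (connected_induce_path4 h12 h23 h34)
      fun hSI => by have := card_le_card hSI; omega
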